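/- arXiv:2308.16520 — 2 statements merged into one kernel-verified Lean document; each statement's English description precedes it below -/
import Mathlib

section
/- Let f₁, f₂ : ℂ → ℙ¹(ℂ) be nonconstant meromorphic functions sharing q distinct values a₁,…,a_q ∈ ℙ¹(ℂ) ignoring multiplicities, with f₁ ≢ f₂. Then using Nevanlinna's second fundamental theorem (q-2)T(r,fᵢ) ≤ Σⱼ N̄(r, aⱼ, fᵢ) + o(T(r,fᵢ)) and the bound Σⱼ N̄(r, aⱼ, fᵢ) ≤ N(r, 1/(f₁-f₂)) ≤ T(r,f₁) + T(r,f₂) + O(1), summing over i = 1,2 yields (q-2)(T(r,f₁)+T(r,f₂)) ≤ 2(T(r,f₁)+T(r,f₂)) + o(T(r,f₁)+T(r,f₂)), hence q ≤ 4. -/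
open Filter Asymptotics

/-- Abstract five-value bound: let `T i` be the Nevanlinna characteristics of two
nonconstant meromorphic functions `f₁ ≢ f₂` on `ℂ` sharing `q` distinct values
ignoring multiplicities, and `Nb i` the corresponding sums `Σⱼ N̄(r, aⱼ, fᵢ)`.
The second fundamental theorem `(q-2)T(r,fᵢ) ≤ Σⱼ N̄(r,aⱼ,fᵢ) + o(T(r,fᵢ))` and
the first-main-theorem bound `Σⱼ N̄(r,aⱼ,fᵢ) ≤ N(r,1/(f₁-f₂)) ≤ T(r,f₁) + T(r,f₂) + O(1)`
force `q ≤ 4`; equivalently, sharing five values forces `f₁ ≡ f₂`. -/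
theorem shared_values_le_four (q : ℕ) (T Nb : Fin 2 → ℝ → ℝ)
    (hTpos : ∀ i, ∀ᶠ r in atTop, 0 < T i r)
    (hTinf : ∀ i, Tendsto (T i) atTop atTop)
    (hNbnn : ∀ i r, 0 ≤ Nb i r)
    (hSMT : ∀ i, ∃ e : ℝ → ℝ, e =o[atTop] (T i) ∧
      ∀ᶠ r in atTop, ((q : ℝ) - 2) * T i r ≤ Nb i r + e r)
    (hFMT : ∀ i, ∃ C : ℝ, ∀ᶠ r in atTop, Nb i r ≤ T 0 r + T 1 r + C) :
    q ≤ 4 := by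
  by_contra hq
  push_neg at hq
  have hq5 : (5:ℝ) ≤ (q:ℝ) := by exact_mod_cast hq
  obtain ⟨e0, he0, hS0⟩ := hSMT 0
  obtain ⟨e1, he1, hS1⟩ := hSMT 1
  obtain ⟨C0, hF0⟩ := hFMT 0
  obtain ⟨C1, hF1⟩ := hFMT 1
  have h0 := he0.def one_half_pos
  have h1 := he1.def one_half_pos
  have hev : ∀ᶠ r in (atTop : Filter ℝ), False := by
    filter_upwards [hS0, hS1, hF0, hF1, h0, h1, hTpos 0, hTpos 1,
      (hTinf 0).eventually_gt_atTop (2*(C0+C1))] with r hs0 hs1 hf0 hf1 hb0 hb1 hp0 hp1 hgt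
    have he0' : e0 r ≤ (1/2) * T 0 r := by
      calc e0 r ≤ ‖e0 r‖ := Real.le_norm_self _
        _ ≤ (1/2) * ‖T 0 r‖ := hb0
        _ = (1/2) * T 0 r := by rw [Real.norm_of_nonneg hp0.le]
    have he1' : e1 r ≤ (1/2) * T 1 r := by
      calc e1 r ≤ ‖e1 r‖ := Real.le_norm_self _
        _ ≤ (1/2) * ‖T 1 r‖ := hb1
        _ = (1/2) * T 1 r := by rw [Real.norm_of_nonneg hp1.le]
    nlinarith [hs0, hs1, hf0, hf1, hp0, hp1]
  exact hev.exists.choose_spec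
end

section
/- For q ≥ 5 distinct values a₁,…,a_q ∈ ℙ¹(ℂ), the conclusion f₁ ≡ f₂ for value-sharing meromorphic functions on ℂ^m follows from the one-variable five-value theorem by restriction to generic complex lines through a point where f₁ ≢ f₂, i.e.: if f₁, f₂ : ℂ^m → ℙ¹(ℂ) are nonconstant meromorphic, share a₁,…,a_q (q ≥ 5) ignoring multiplicities, then f₁ ≡ f₂. -/
open OnePoint

/-- A map `f : E → ℙ¹(ℂ)` (with `E` a complex normed space, e.g. `ℂᵐ`) is a
meromorphic function if it is given globally by a quotient `g/h` of holomorphic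
functions with no common zeros, taking the value `∞` at the zeros of `h`. -/
def IsMeromorphicSphereMap {E : Type*} [NormedAddCommGroup E] [NormedSpace ℂ E]
    (f : E → OnePoint ℂ) : Prop :=
  ∃ g h : E → ℂ, AnalyticOnNhd ℂ g Set.univ ∧ AnalyticOnNhd ℂ h Set.univ ∧
    (∀ z, ¬(g z = 0 ∧ h z = 0)) ∧
    (∀ z, f z = if h z = 0 then (∞ : OnePoint ℂ) else ((g z / h z : ℂ) : OnePoint ℂ))

/-- Analytic functions on a preconnected space have no zero divisors. -/
lemma analytic_mul_eq_zero {E : Type*} [NormedAddCommGroup E] [NormedSpace ℂ E]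
    [PreconnectedSpace E]
    {φ₁ φ₂ : E → ℂ} (h₁ : AnalyticOnNhd ℂ φ₁ Set.univ) (h₂ : AnalyticOnNhd ℂ φ₂ Set.univ)
    (h : ∀ w, φ₁ w * φ₂ w = 0) :
    (∀ w, φ₁ w = 0) ∨ (∀ w, φ₂ w = 0) := by
  by_contra hcon
  push_neg at hcon
  obtain ⟨⟨w₁, hw₁⟩, ⟨w₂, hw₂⟩⟩ := hcon
  have hne : ∀ᶠ w in nhds w₁, φ₁ w ≠ 0 :=
    ((h₁ w₁ trivial).continuousAt).eventually_ne hw₁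
  have hev : φ₂ =ᶠ[nhds w₁] 0 := by
    filter_upwards [hne] with w hw
    rcases mul_eq_zero.1 (h w) with h' | h'
    · exact absurd h' hw
    · exact h'
  exact hw₂ (h₂.eqOn_zero_of_preconnected_of_eventuallyEq_zero isPreconnected_univ
    (Set.mem_univ w₁) hev (Set.mem_univ w₂))

/-- The zero set of `w ↦ g w * h p - h w * g p` is exactly `{w | f w = f p}`. -/
lemma phi_spec {E : Type*} [NormedAddCommGroup E] [NormedSpace ℂ E]
    (f : E → OnePoint ℂ) (g h : E → ℂ)
    (hgh : ∀ z, ¬(g z = 0 ∧ h z = 0))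
    (hf : ∀ z, f z = if h z = 0 then (∞ : OnePoint ℂ) else ((g z / h z : ℂ) : OnePoint ℂ))
    (p w : E) : f w = f p ↔ g w * h p - h w * g p = 0 := by
  by_cases hp : h p = 0
  · have hgp : g p ≠ 0 := fun h0 => hgh p ⟨h0, hp⟩
    by_cases hw : h w = 0
    · simp [hf w, hf p, hp, hw]
    · rw [hf w, hf p, if_neg hw, if_pos hp]
      simp [OnePoint.coe_ne_infty, hp, hw, hgp]
  · by_cases hw : h w = 0
    · have hgw : g w ≠ 0 := fun h0 => hgh w ⟨h0, hw⟩
      rw [hf w, hf p, if_pos hw, if_neg hp]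
      simp [OnePoint.infty_ne_coe, hw, hgw, hp]
    · rw [hf w, hf p, if_neg hw, if_neg hp, OnePoint.coe_eq_coe, div_eq_div_iff hw hp,
        sub_eq_zero, mul_comm (g p) (h w)]

/-- The `ℂᵐ` five-value theorem, derived (by restriction to generic complex lines)
from the one-variable five-value theorem, which is taken as a hypothesis:
if `f₁, f₂ : ℂᵐ → ℙ¹(ℂ)` are nonconstant meromorphic and share `q ≥ 5` distinct
values ignoring multiplicities, then `f₁ ≡ f₂`. -/
theorem five_value_theorem_Cm
    (oneVar : ∀ g₁ g₂ : ℂ → OnePoint ℂ,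
      IsMeromorphicSphereMap g₁ → IsMeromorphicSphereMap g₂ →
      (¬ ∃ c : OnePoint ℂ, ∀ z, g₁ z = c) → (¬ ∃ c : OnePoint ℂ, ∀ z, g₂ z = c) →
      ∀ b : Fin 5 → OnePoint ℂ, Function.Injective b →
      (∀ j : Fin 5, {z : ℂ | g₁ z = b j} = {z : ℂ | g₂ z = b j}) → g₁ = g₂)
    (m q : ℕ) (hq : 5 ≤ q)
    (f₁ f₂ : (Fin m → ℂ) → OnePoint ℂ)
    (hf₁ : IsMeromorphicSphereMap f₁) (hf₂ : IsMeromorphicSphereMap f₂)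
    (hc₁ : ¬ ∃ c : OnePoint ℂ, ∀ z, f₁ z = c)
    (hc₂ : ¬ ∃ c : OnePoint ℂ, ∀ z, f₂ z = c)
    (a : Fin q → OnePoint ℂ) (ha : Function.Injective a)
    (hshare : ∀ j : Fin q, {z : Fin m → ℂ | f₁ z = a j} = {z : Fin m → ℂ | f₂ z = a j}) :
    f₁ = f₂ := by
  obtain ⟨g₁, h₁, hg₁, hh₁, hne₁, hrep₁⟩ := hf₁
  obtain ⟨g₂, h₂, hg₂, hh₂, hne₂, hrep₂⟩ := hf₂
  push_neg at hc₁ hc₂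
  funext p
  -- the analytic functions cutting out the level sets `{fᵢ = fᵢ p}`
  set φ₁ : (Fin m → ℂ) → ℂ := fun w => g₁ w * h₁ p - h₁ w * g₁ p with hφ₁def
  set φ₂ : (Fin m → ℂ) → ℂ := fun w => g₂ w * h₂ p - h₂ w * g₂ p with hφ₂def
  have hφ₁spec : ∀ w, f₁ w = f₁ p ↔ φ₁ w = 0 := fun w => phi_spec f₁ g₁ h₁ hne₁ hrep₁ p w
  have hφ₂spec : ∀ w, f₂ w = f₂ p ↔ φ₂ w = 0 := fun w => phi_spec f₂ g₂ h₂ hne₂ hrep₂ p w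
  have hφ₁a : AnalyticOnNhd ℂ φ₁ Set.univ :=
    (hg₁.mul analyticOnNhd_const).sub (hh₁.mul analyticOnNhd_const)
  have hφ₂a : AnalyticOnNhd ℂ φ₂ Set.univ :=
    (hg₂.mul analyticOnNhd_const).sub (hh₂.mul analyticOnNhd_const)
  obtain ⟨w₁, hw₁⟩ := hc₁ (f₁ p)
  obtain ⟨w₂, hw₂⟩ := hc₂ (f₂ p)
  have hφ₁ne : φ₁ w₁ ≠ 0 := fun h0 => hw₁ ((hφ₁spec w₁).2 h0)
  have hφ₂ne : φ₂ w₂ ≠ 0 := fun h0 => hw₂ ((hφ₂spec w₂).2 h0)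
  -- choose a generic direction: both restrictions of φ₁, φ₂ to the line are nonzero
  have hv : ∃ v : Fin m → ℂ,
      (∃ z : ℂ, φ₁ (p + z • v) ≠ 0) ∧ (∃ z : ℂ, φ₂ (p + z • v) ≠ 0) := by
    by_contra hcon
    push_neg at hcon
    have hmul : ∀ w, φ₁ w * φ₂ w = 0 := by
      intro w
      by_cases hφ : φ₁ w = 0
      · rw [hφ, zero_mul]
      · have h1 : φ₁ (p + (1 : ℂ) • (w - p)) ≠ 0 := by simpa using hφ
        have h2 := hcon (w - p) ⟨1, h1⟩ 1
        simp only [one_smul, add_sub_cancel] at h2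
        rw [h2, mul_zero]
    rcases analytic_mul_eq_zero hφ₁a hφ₂a hmul with H | H
    · exact hφ₁ne (H w₁)
    · exact hφ₂ne (H w₂)
  obtain ⟨v, ⟨z₁, hz₁⟩, ⟨z₂, hz₂⟩⟩ := hv
  -- the line through `p` in direction `v`
  set L : ℂ → (Fin m → ℂ) := fun z => p + z • v with hLdef
  have hL : AnalyticOnNhd ℂ L Set.univ :=
    analyticOnNhd_const.add (analyticOnNhd_id.smul analyticOnNhd_const)
  have hL0 : L 0 = p := by simp [hLdef]
  have hmero₁ : IsMeromorphicSphereMap (f₁ ∘ L) :=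
    ⟨g₁ ∘ L, h₁ ∘ L, hg₁.comp hL (Set.mapsTo_univ _ _), hh₁.comp hL (Set.mapsTo_univ _ _),
      fun z => hne₁ (L z), fun z => hrep₁ (L z)⟩
  have hmero₂ : IsMeromorphicSphereMap (f₂ ∘ L) :=
    ⟨g₂ ∘ L, h₂ ∘ L, hg₂.comp hL (Set.mapsTo_univ _ _), hh₂.comp hL (Set.mapsTo_univ _ _),
      fun z => hne₂ (L z), fun z => hrep₂ (L z)⟩
  have hnc₁ : ¬ ∃ c : OnePoint ℂ, ∀ z, (f₁ ∘ L) z = c := by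
    rintro ⟨c, hc⟩
    have hc0 : c = f₁ p := by rw [← hc 0, Function.comp_apply, hL0]
    exact hz₁ ((hφ₁spec (L z₁)).1 (by rw [← hc0]; exact hc z₁))
  have hnc₂ : ¬ ∃ c : OnePoint ℂ, ∀ z, (f₂ ∘ L) z = c := by
    rintro ⟨c, hc⟩
    have hc0 : c = f₂ p := by rw [← hc 0, Function.comp_apply, hL0]
    exact hz₂ ((hφ₂spec (L z₂)).1 (by rw [← hc0]; exact hc z₂))
  have hbinj : Function.Injective (fun j : Fin 5 => a (Fin.castLE hq j)) :=
    ha.comp (Fin.castLE_injective hq)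
  have hsh : ∀ j : Fin 5,
      {z : ℂ | (f₁ ∘ L) z = a (Fin.castLE hq j)} = {z : ℂ | (f₂ ∘ L) z = a (Fin.castLE hq j)} := by
    intro j
    ext z
    have := Set.ext_iff.1 (hshare (Fin.castLE hq j)) (L z)
    simpa using this
  have heq := oneVar (f₁ ∘ L) (f₂ ∘ L) hmero₁ hmero₂ hnc₁ hnc₂
    (fun j => a (Fin.castLE hq j)) hbinj hsh
  have := congrFun heq 0
  rwa [Function.comp_apply, Function.comp_apply, hL0] at this
end
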